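/- arXiv:1706.09061 — 3 statements merged into one kernel-verified Lean document; each statement's English description precedes it below -/
import Mathlib

section
/- For every natural number j ≥ 0, 2 · (2j+1)!! / (2j+4)!! ≤ 1 / ((j+2) · √(π(j+1))). -/
/-! The partial Wallis product `W k` is the square of `P k = ∏_{i<k} (2i+2)/(2i+1)` divided by
`2k+1`, and it is at least `(2k+1)/(2k+2) · π/2`. Hence `P k ^ 2 ≥ (2k+1)² π / (4(k+1)) ≥ π k`,
i.e. `(2k-1)!!/(2k)!! ≤ 1/√(πk)`, and the theorem is the case `k = j + 1` divided by `j + 2`. -/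

open Finset Real

namespace Real.Wallis

theorem sq_prod_two_mul_add_two_div_two_mul_add_one (k : ℕ) :
    (∏ i ∈ range k, ((2 * (i : ℝ) + 2) / (2 * i + 1))) ^ 2 = (2 * k + 1) * W k := by
  induction k with
  | zero => simp [W]
  | succ k ih =>
    rw [prod_range_succ, mul_pow, ih, W_succ]
    push_cast
    field_simp
    ring

theorem pi_mul_le_sq_prod_two_mul_add_two_div_two_mul_add_one (k : ℕ) :
    π * k ≤ (∏ i ∈ range k, ((2 * (i : ℝ) + 2) / (2 * i + 1))) ^ 2 := by
  rw [sq_prod_two_mul_add_two_div_two_mul_add_one]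
  have hW := le_W k
  rw [div_mul_eq_mul_div, div_le_iff₀ (by positivity)] at hW
  nlinarith [pi_pos]

theorem sqrt_pi_mul_le_prod_two_mul_add_two_div_two_mul_add_one (k : ℕ) :
    √(π * k) ≤ ∏ i ∈ range k, ((2 * (i : ℝ) + 2) / (2 * i + 1)) :=
  (sqrt_le_left (prod_nonneg fun _ _ => by positivity)).2
    (pi_mul_le_sq_prod_two_mul_add_two_div_two_mul_add_one k)

end Real.Wallis

theorem stmt_2 (j : ℕ) :
    2 * (∏ i ∈ Finset.range (j + 1), ((2 * i + 1 : ℕ) : ℝ)) /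
        (∏ i ∈ Finset.range (j + 2), ((2 * (i + 1) : ℕ) : ℝ)) ≤
      1 / (((j : ℝ) + 2) * Real.sqrt (Real.pi * ((j : ℝ) + 1))) := by
  have hlhs : 2 * (∏ i ∈ range (j + 1), ((2 * i + 1 : ℕ) : ℝ)) /
        (∏ i ∈ range (j + 2), ((2 * (i + 1) : ℕ) : ℝ)) =
      1 / (((j : ℝ) + 2) * ∏ i ∈ range (j + 1), ((2 * (i : ℝ) + 2) / (2 * i + 1))) := by
    have hodd : 0 < ∏ i ∈ range (j + 1), (2 * (i : ℝ) + 1) := prod_pos fun _ _ => by positivity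
    have heven : 0 < ∏ i ∈ range (j + 1), (2 * (i : ℝ) + 2) := prod_pos fun _ _ => by positivity
    rw [prod_range_succ _ (j + 1), prod_div_distrib]
    push_cast
    field_simp
    ring
  have hsqrt := Wallis.sqrt_pi_mul_le_prod_two_mul_add_two_div_two_mul_add_one (j + 1)
  push_cast at hsqrt
  rw [hlhs]
  gcongr
end

section
/- For every natural number j ≥ 1, (2j-1)!! / (2j)!! ≤ 1/√(π j). -/
/-!
Write `r j = ∏_{i<j} (2i+1)/(2i+2)`. Wallis' partial product is exactly `W j = 1 / (r j ^ 2 (2j+1))`,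
and the sine-integral bound `(2j+1)/(2j+2) · π/2 ≤ W j` turns this into
`π r j ^ 2 (2j+1)^2 ≤ 4(j+1)`; since `4j(j+1) ≤ (2j+1)^2`, this gives `π j r j ^ 2 ≤ 1`.
-/

open Finset Real

namespace Real.Wallis

theorem W_mul_sq_prod_odd_div_even (j : ℕ) :
    W j * (∏ i ∈ range j, (2 * (i : ℝ) + 1) / (2 * i + 2)) ^ 2 * (2 * j + 1) = 1 := by
  induction j with
  | zero => simp [W]
  | succ j ih =>
    rw [W_succ, prod_range_succ]
    generalize W j = w, ∏ i ∈ range j, (2 * (i : ℝ) + 1) / (2 * i + 2) = r at ih ⊢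
    calc _ = w * r ^ 2 * (2 * j + 1) := by push_cast; field_simp; ring
      _ = 1 := ih

theorem sq_prod_odd_div_even_le_inv {j : ℕ} (hj : 1 ≤ j) :
    (∏ i ∈ range j, (2 * (i : ℝ) + 1) / (2 * i + 2)) ^ 2 ≤ (π * j)⁻¹ := by
  set r := ∏ i ∈ range j, (2 * (i : ℝ) + 1) / (2 * i + 2)
  have hj' : (1 : ℝ) ≤ j := by exact_mod_cast hj
  have hW : (2 * (j : ℝ) + 1) / (2 * j + 2) * (π / 2) * (r ^ 2 * (2 * j + 1)) ≤ 1 := calc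
    _ ≤ W j * (r ^ 2 * (2 * j + 1)) := by gcongr; exact le_W j
    _ = 1 := by rw [← mul_assoc]; exact W_mul_sq_prod_odd_div_even j
  have hπr : 0 ≤ π * r ^ 2 := by positivity
  have key : π * r ^ 2 * j * (4 * (j + 1)) ≤ 1 * (4 * (j + 1)) := calc
    _ ≤ π * r ^ 2 * (2 * j + 1) ^ 2 := by nlinarith
    _ ≤ 1 * (4 * (j + 1)) := by field_simp at hW; linarith
  rw [← one_div, le_div_iff₀ (by positivity)]
  linarith [le_of_mul_le_mul_right key (by positivity)]

end Real.Wallis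

theorem stmt_3 (j : ℕ) (hj : 1 ≤ j) :
    (∏ i ∈ Finset.range j, ((2 * i + 1 : ℕ) : ℝ)) /
        (∏ i ∈ Finset.range j, ((2 * (i + 1) : ℕ) : ℝ)) ≤
      1 / Real.sqrt (Real.pi * (j : ℝ)) := by
  have hr : (∏ i ∈ range j, ((2 * i + 1 : ℕ) : ℝ)) / ∏ i ∈ range j, ((2 * (i + 1) : ℕ) : ℝ) =
      ∏ i ∈ range j, (2 * (i : ℝ) + 1) / (2 * i + 2) := by
    rw [← prod_div_distrib]
    push_cast
    ring_nf
  rw [hr, one_div, ← sqrt_inv]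
  exact le_sqrt_of_sq_le (Wallis.sq_prod_odd_div_even_le_inv hj)
end

section
/- For s ∈ (0,1), α ≥ 0, β > -1, the sequence λ_n^{(0)} = Γ(n+α+1) Γ(n+β+s+1) / (Γ(n+α-s+1) Γ(n+β+1)) is strictly increasing in n ≥ 0. -/
open Real

/-
The sequence factors as `(Γ(x + s) / Γ(x)) · (Γ(y + s) / Γ(y))` with `x = n + α - s + 1` and
`y = n + β + 1`, both positive. By `Γ(z + 1) = z Γ(z)`, raising `z` by one multiplies
`Γ(z + s) / Γ(z)` by `(z + s) / z > 1`, so each positive factor is strictly increasing in `n`.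
-/

lemma Gamma_add_div_Gamma_lt_succ {x t : ℝ} (hx : 0 < x) (ht : 0 < t) :
    Gamma (x + t) / Gamma x < Gamma (x + 1 + t) / Gamma (x + 1) := by
  have hxt : 0 < x + t := by linarith
  have hratio : 0 < Gamma (x + t) / Gamma x := div_pos (Gamma_pos_of_pos hxt) (Gamma_pos_of_pos hx)
  have hstep : Gamma (x + 1 + t) / Gamma (x + 1) = (x + t) / x * (Gamma (x + t) / Gamma x) := by
    rw [add_right_comm, Gamma_add_one hxt.ne', Gamma_add_one hx.ne', mul_div_mul_comm]
  rw [hstep]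
  exact lt_mul_of_one_lt_left hratio ((one_lt_div hx).mpr (by linarith))

lemma strictMono_Gamma_add_div_Gamma {x t : ℝ} (hx : 0 < x) (ht : 0 < t) :
    StrictMono fun n : ℕ => Gamma (n + x + t) / Gamma (n + x) := by
  refine strictMono_nat_of_lt_succ fun n => ?_
  push_cast
  rw [add_right_comm (n : ℝ) 1 x]
  exact Gamma_add_div_Gamma_lt_succ (by positivity) ht

lemma Gamma_add_div_Gamma_pos {x t : ℝ} (hx : 0 < x) (ht : 0 < t) (n : ℕ) :
    0 < Gamma (n + x + t) / Gamma (n + x) :=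
  div_pos (Gamma_pos_of_pos (by positivity)) (Gamma_pos_of_pos (by positivity))

theorem stmt_8 (s α β : ℝ) (hs0 : 0 < s) (hs1 : s < 1) (hα : 0 ≤ α) (hβ : -1 < β) :
    StrictMono (fun n : ℕ =>
      Real.Gamma (n + α + 1) * Real.Gamma (n + β + s + 1) /
        (Real.Gamma (n + α - s + 1) * Real.Gamma (n + β + 1))) := by
  have hx : 0 < α - s + 1 := by linarith
  have hy : 0 < β + 1 := by linarith
  have hfactor : (fun n : ℕ =>
      Real.Gamma (n + α + 1) * Real.Gamma (n + β + s + 1) /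
        (Real.Gamma (n + α - s + 1) * Real.Gamma (n + β + 1))) =
      (fun n : ℕ => Gamma (n + (α - s + 1) + s) / Gamma (n + (α - s + 1))) *
        fun n : ℕ => Gamma (n + (β + 1) + s) / Gamma (n + (β + 1)) := by
    funext n
    rw [Pi.mul_apply, mul_div_mul_comm, show (n : ℝ) + (α - s + 1) + s = n + α + 1 by ring,
      show (n : ℝ) + (α - s + 1) = n + α - s + 1 by ring,
      show (n : ℝ) + (β + 1) + s = n + β + s + 1 by ring, ← add_assoc]
  rw [hfactor]
  exact (strictMono_Gamma_add_div_Gamma hx hs0).mul (strictMono_Gamma_add_div_Gamma hy hs0)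
    (fun n => (Gamma_add_div_Gamma_pos hx hs0 n).le) fun n => (Gamma_add_div_Gamma_pos hy hs0 n).le
end
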